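/- If F is ν-Hölder continuous with constant L (ν ∈ (0,1]) and x* satisfies generalized monotonicity, then the extragradient iterates satisfy V(x_k, y_k) − 2^{ν−1} L² γ_k² α^{−(1+ν)} [V(x_k, y_k)]^ν ≤ V(x_k, x*) − V(x_{k+1}, x*). -/

import Mathlib

open scoped InnerProductSpace

/-! Each extragradient half-step is a Bregman prox step, and its first-order optimality condition,
combined with the three-point identity of the Bregman distance, gives
`⟪ξ, u - z⟫ ≤ V(x,z) - V(u,z) - V(x,u)` for the prox point `u`. Applying this to `y_k` (tested
against `x_{k+1}`) and to `x_{k+1}` (tested against `x*`), and dropping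
`γ_k ⟪F(y_k), y_k - x*⟫ ≥ 0`, leaves
`V(x_k,y_k) + V(y_k,x_{k+1}) ≤ V(x_k,x*) - V(x_{k+1},x*) + γ_k ⟪F(x_k) - F(y_k), x_{k+1} - y_k⟫`.
Hölder continuity bounds the last term by `γ_k L ‖x_k - y_k‖^ν ‖y_k - x_{k+1}‖`; Young's inequality
absorbs `‖y_k - x_{k+1}‖` into `V(y_k,x_{k+1}) ≥ (α/2)‖y_k - x_{k+1}‖²`, and
`‖x_k - y_k‖² ≤ (2/α) V(x_k,y_k)` turns what remains into the `ν`-th power term. -/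

/-- The Bregman distance `V(x,z) = ω(z) − ω(x) − ⟨∇ω(x), z−x⟩`. -/
noncomputable def bregman {n : ℕ} (ω : EuclideanSpace ℝ (Fin n) → ℝ)
    (gω : EuclideanSpace ℝ (Fin n) → EuclideanSpace ℝ (Fin n))
    (x z : EuclideanSpace ℝ (Fin n)) : ℝ :=
  ω z - ω x - ⟪gω x, z - x⟫_ℝ

section HomogeneousNorm

variable {E : Type*} [AddCommGroup E] [Module ℝ E] {nrm : E → ℝ}

lemma nrm_zero_of_homogeneous (hns : ∀ (c : ℝ) v, nrm (c • v) = |c| * nrm v) : nrm 0 = 0 := by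
  simpa using hns 0 0

lemma nrm_neg_of_homogeneous (hns : ∀ (c : ℝ) v, nrm (c • v) = |c| * nrm v) (v : E) :
    nrm (-v) = nrm v := by
  simpa using hns (-1) v

lemma nrm_sub_comm_of_homogeneous (hns : ∀ (c : ℝ) v, nrm (c • v) = |c| * nrm v) (v w : E) :
    nrm (v - w) = nrm (w - v) := by
  rw [← neg_sub, nrm_neg_of_homogeneous hns]

lemma nrm_nonneg_of_homogeneous (hns : ∀ (c : ℝ) v, nrm (c • v) = |c| * nrm v)
    (hnt : ∀ v w, nrm (v + w) ≤ nrm v + nrm w) (v : E) : 0 ≤ nrm v := by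
  have := hnt v (-v)
  rw [add_neg_cancel, nrm_zero_of_homogeneous hns, nrm_neg_of_homogeneous hns] at this
  linarith

lemma exists_apply_le_mul_nrm [FiniteDimensional ℝ E] (hn0 : ∀ v, nrm v = 0 ↔ v = 0)
    (hns : ∀ (c : ℝ) v, nrm (c • v) = |c| * nrm v) (hnt : ∀ v w, nrm (v + w) ≤ nrm v + nrm w)
    (ℓ : E →ₗ[ℝ] ℝ) : ∃ C, 0 ≤ C ∧ ∀ v, ℓ v ≤ C * nrm v := by
  let : NormedAddCommGroup E := AddGroupNorm.toNormedAddCommGroup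
    { toFun := nrm
      map_zero' := nrm_zero_of_homogeneous hns
      add_le' := hnt
      neg' := nrm_neg_of_homogeneous hns
      eq_zero_of_map_eq_zero' := fun v => (hn0 v).1 }
  let : NormedSpace ℝ E := { norm_smul_le := fun c v => (hns c v).le }
  let ℓc := LinearMap.toContinuousLinearMap ℓ
  exact ⟨‖ℓc‖, norm_nonneg _, fun v => (le_abs_self _).trans (ℓc.le_opNorm v)⟩

end HomogeneousNorm

lemma inner_le_sSup_mul_nrm {E : Type*} [NormedAddCommGroup E] [InnerProductSpace ℝ E]
    [FiniteDimensional ℝ E] {nrm : E → ℝ} (hn0 : ∀ v, nrm v = 0 ↔ v = 0)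
    (hns : ∀ (c : ℝ) v, nrm (c • v) = |c| * nrm v) (hnt : ∀ v w, nrm (v + w) ≤ nrm v + nrm w)
    (φ v : E) : ⟪φ, v⟫_ℝ ≤ sSup ((fun w => ⟪φ, w⟫_ℝ) '' {w | nrm w ≤ 1}) * nrm v := by
  obtain ⟨C, hC0, hC⟩ := exists_apply_le_mul_nrm hn0 hns hnt (innerₛₗ ℝ φ)
  have hbdd : BddAbove ((fun w => ⟪φ, w⟫_ℝ) '' {w | nrm w ≤ 1}) := by
    refine ⟨C, ?_⟩
    rintro _ ⟨w, hw, rfl⟩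
    calc ⟪φ, w⟫_ℝ ≤ C * nrm w := hC w
      _ ≤ C := mul_le_of_le_one_right hC0 hw
  rcases (nrm_nonneg_of_homogeneous hns hnt v).eq_or_lt with hv | hv
  · simp [(hn0 v).1 hv.symm, nrm_zero_of_homogeneous hns]
  · have hunit : nrm ((nrm v)⁻¹ • v) ≤ 1 := by
      rw [hns, abs_of_pos (inv_pos.2 hv), inv_mul_cancel₀ hv.ne']
    have hle : ⟪φ, (nrm v)⁻¹ • v⟫_ℝ ≤ _ := le_csSup hbdd ⟨_, hunit, rfl⟩
    rw [real_inner_smul_right, inv_mul_le_iff₀ hv] at hle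
    linarith

lemma IsMinOn.hasFDerivAt_apply_sub_nonneg {E : Type*} [NormedAddCommGroup E] [NormedSpace ℝ E]
    {f : E → ℝ} {f' : E →L[ℝ] ℝ} {s : Set E} {a y : E} (h : IsMinOn f s a) (hs : Convex ℝ s)
    (ha : a ∈ s) (hy : y ∈ s) (hf : HasFDerivAt f f' a) : 0 ≤ f' (y - a) :=
  h.localize.hasFDerivWithinAt_nonneg hf.hasFDerivWithinAt
    (sub_mem_posTangentConeAt_of_segment_subset (hs.segment_subset ha hy))

section Bregman

variable {n : ℕ} {ω : EuclideanSpace ℝ (Fin n) → ℝ}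
  {gω : EuclideanSpace ℝ (Fin n) → EuclideanSpace ℝ (Fin n)}

lemma bregman_three_point (x y z : EuclideanSpace ℝ (Fin n)) :
    ⟪gω y - gω x, z - y⟫_ℝ = bregman ω gω x z - bregman ω gω y z - bregman ω gω x y := by
  simp only [bregman, inner_sub_left, inner_sub_right]
  ring

lemma hasFDerivAt_inner_add_bregman {ξ x u : EuclideanSpace ℝ (Fin n)}
    (hg : HasGradientAt ω (gω u) u) :
    HasFDerivAt (fun z => ⟪ξ, z⟫_ℝ + bregman ω gω x z)
      (innerSL ℝ (ξ + gω u - gω x)) u := by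
  have h := (innerSL ℝ ξ).hasFDerivAt.add ((hg.hasFDerivAt.sub_const (ω x)).sub
    ((innerSL ℝ (gω x)).hasFDerivAt.sub_const ⟪gω x, x⟫_ℝ))
  refine (h.congr_fderiv ?_).congr_of_eventuallyEq (.of_forall fun z => ?_)
  · ext v
    simp only [add_apply, sub_apply, coe_innerSL_apply,
      InnerProductSpace.toDual_apply_apply, inner_add_left, inner_sub_left]
    ring
  · simp only [bregman, inner_sub_right, coe_innerSL_apply, Pi.add_apply, Pi.sub_apply]

lemma inner_sub_le_bregman_of_isMinOn {X : Set (EuclideanSpace ℝ (Fin n))} (hX : Convex ℝ X)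
    {ξ x u z : EuclideanSpace ℝ (Fin n)} (hu : u ∈ X)
    (hmin : IsMinOn (fun z => ⟪ξ, z⟫_ℝ + bregman ω gω x z) X u)
    (hg : HasGradientAt ω (gω u) u) (hz : z ∈ X) :
    ⟪ξ, u - z⟫_ℝ ≤ bregman ω gω x z - bregman ω gω u z - bregman ω gω x u := by
  have hopt := hmin.hasFDerivAt_apply_sub_nonneg hX hu hz (hasFDerivAt_inner_add_bregman hg)
  have h3 := bregman_three_point (ω := ω) (gω := gω) x u z
  rw [innerSL_apply_apply, inner_sub_left, inner_add_left] at hopt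
  rw [inner_sub_left] at h3
  rw [← neg_sub z u, inner_neg_right]
  linarith

lemma bregman_add_bregman_le_of_extragradient {X : Set (EuclideanSpace ℝ (Fin n))}
    (hX : Convex ℝ X) {F : EuclideanSpace ℝ (Fin n) → EuclideanSpace ℝ (Fin n)} {γ : ℝ}
    (hγ : 0 ≤ γ) {xs x y x' : EuclideanSpace ℝ (Fin n)} (hxs : xs ∈ X)
    (hGM : 0 ≤ ⟪F y, y - xs⟫_ℝ)
    (hyX : y ∈ X) (hy : IsMinOn (fun z => ⟪γ • F x, z⟫_ℝ + bregman ω gω x z) X y)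
    (hgy : HasGradientAt ω (gω y) y)
    (hx'X : x' ∈ X) (hx' : IsMinOn (fun z => ⟪γ • F y, z⟫_ℝ + bregman ω gω x z) X x')
    (hgx' : HasGradientAt ω (gω x') x') :
    bregman ω gω x y + bregman ω gω y x' ≤
      bregman ω gω x xs - bregman ω gω x' xs + γ * ⟪F x - F y, x' - y⟫_ℝ := by
  have hprox_y := inner_sub_le_bregman_of_isMinOn hX hyX hy hgy hx'X
  have hprox_x' := inner_sub_le_bregman_of_isMinOn hX hx'X hx' hgx' hxs
  have hsplit : γ * ⟪F x, y - x'⟫_ℝ + γ * ⟪F y, x' - xs⟫_ℝ =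
      γ * ⟪F y, y - xs⟫_ℝ - γ * ⟪F x - F y, x' - y⟫_ℝ := by
    simp only [inner_sub_left, inner_sub_right]
    ring
  rw [real_inner_smul_left] at hprox_y hprox_x'
  linarith [mul_nonneg hγ hGM]

end Bregman

lemma rpow_sq_le_of_half_mul_sq_le {α a A ν : ℝ} (hα : 0 < α) (hν : 0 ≤ ν) (ha : 0 ≤ a)
    (hA : α / 2 * a ^ 2 ≤ A) : (a ^ ν) ^ 2 ≤ (2 / α) ^ ν * A ^ ν := by
  have ha2 : a ^ 2 ≤ 2 / α * A := by
    rw [div_mul_eq_mul_div, le_div_iff₀ hα]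
    linarith
  calc (a ^ ν) ^ 2 = (a ^ 2) ^ ν := by
        rw [← Real.rpow_natCast, ← Real.rpow_mul ha, mul_comm, Real.rpow_mul ha, Real.rpow_natCast]
    _ ≤ (2 / α * A) ^ ν := Real.rpow_le_rpow (sq_nonneg a) ha2 hν
    _ = (2 / α) ^ ν * A ^ ν := Real.mul_rpow (by positivity) (by nlinarith [sq_nonneg a])

lemma two_div_rpow_div_two_mul {α : ℝ} (hα : 0 < α) (ν : ℝ) :
    (2 / α) ^ ν / (2 * α) = 2 ^ (ν - 1) * α ^ (-(1 + ν)) := by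
  rw [Real.rpow_sub two_pos, Real.rpow_one, Real.rpow_neg hα.le, Real.rpow_add hα,
    Real.rpow_one, Real.div_rpow zero_le_two hα.le]
  field_simp

lemma sub_mul_rpow_le_of_add_le_add_mul_rpow_mul {α γ L ν a b A D Δ : ℝ} (hα : 0 < α) (hν : 0 ≤ ν)
    (ha : 0 ≤ a) (hA : α / 2 * a ^ 2 ≤ A) (hD : α / 2 * b ^ 2 ≤ D)
    (h : A + D ≤ Δ + γ * (L * a ^ ν * b)) :
    A - 2 ^ (ν - 1) * L ^ 2 * γ ^ 2 * α ^ (-(1 + ν)) * A ^ ν ≤ Δ := by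
  set P := γ * L * a ^ ν
  have hyoung : P * b - α / 2 * b ^ 2 ≤ P ^ 2 / (2 * α) := by
    rw [le_div_iff₀ (by positivity)]
    nlinarith [sq_nonneg (P - α * b)]
  have hP : P ^ 2 / (2 * α) ≤ 2 ^ (ν - 1) * L ^ 2 * γ ^ 2 * α ^ (-(1 + ν)) * A ^ ν := by
    calc P ^ 2 / (2 * α) = γ ^ 2 * L ^ 2 * (a ^ ν) ^ 2 / (2 * α) := by ring
      _ ≤ γ ^ 2 * L ^ 2 * ((2 / α) ^ ν * A ^ ν) / (2 * α) := by
          gcongr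
          exact rpow_sq_le_of_half_mul_sq_le hα hν ha hA
      _ = 2 ^ (ν - 1) * L ^ 2 * γ ^ 2 * α ^ (-(1 + ν)) * A ^ ν := by
          linear_combination γ ^ 2 * L ^ 2 * A ^ ν * two_div_rpow_div_two_mul hα ν
  have : γ * (L * a ^ ν * b) = P * b := by ring
  linarith

theorem stmt14_general {n : ℕ} (X Xo : Set (EuclideanSpace ℝ (Fin n)))
    (hXcv : Convex ℝ X)
    (nrm dnrm : EuclideanSpace ℝ (Fin n) → ℝ)
    (hn0 : ∀ v, nrm v = 0 ↔ v = 0)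
    (hns : ∀ (c : ℝ) v, nrm (c • v) = |c| * nrm v)
    (hnt : ∀ v w, nrm (v + w) ≤ nrm v + nrm w)
    (hdual : ∀ φ, dnrm φ = sSup ((fun v => ⟪φ, v⟫_ℝ) '' {v | nrm v ≤ 1}))
    (F : EuclideanSpace ℝ (Fin n) → EuclideanSpace ℝ (Fin n))
    (L : ℝ) (ν : ℝ) (hν0 : 0 < ν)
    (hF : ∀ x ∈ X, ∀ y ∈ X, dnrm (F x - F y) ≤ L * (nrm (x - y)) ^ ν)
    (α : ℝ) (hα : 0 < α)
    (ω : EuclideanSpace ℝ (Fin n) → ℝ)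
    (gω : EuclideanSpace ℝ (Fin n) → EuclideanSpace ℝ (Fin n))
    (hgrad : ∀ y ∈ Xo, HasGradientAt ω (gω y) y)
    (hsc : ∀ y ∈ Xo, ∀ z ∈ X, α / 2 * (nrm (y - z)) ^ 2 ≤ bregman ω gω y z)
    (xs : EuclideanSpace ℝ (Fin n)) (hxs : xs ∈ X)
    (hGM : ∀ x ∈ X, 0 ≤ ⟪F x, x - xs⟫_ℝ)
    (γk : ℝ) (hγk : 0 < γk)
    (xk yk xk1 : EuclideanSpace ℝ (Fin n))
    (hxk : xk ∈ X) (hxko : xk ∈ Xo)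
    (hykX : yk ∈ X) (hyko : yk ∈ Xo)
    (hyk : IsMinOn (fun z => ⟪γk • F xk, z⟫_ℝ + bregman ω gω xk z) X yk)
    (hxk1X : xk1 ∈ X) (hxk1o : xk1 ∈ Xo)
    (hxk1 : IsMinOn (fun z => ⟪γk • F yk, z⟫_ℝ + bregman ω gω xk z) X xk1) :
    bregman ω gω xk yk -
        (2 : ℝ) ^ (ν - 1) * L ^ 2 * γk ^ 2 * α ^ (-(1 + ν)) *
          (bregman ω gω xk yk) ^ ν ≤
      bregman ω gω xk xs - bregman ω gω xk1 xs := by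
  have hstep := bregman_add_bregman_le_of_extragradient hXcv hγk.le hxs (hGM yk hykX)
    hykX hyk (hgrad yk hyko) hxk1X hxk1 (hgrad xk1 hxk1o)
  have hholder : ⟪F xk - F yk, xk1 - yk⟫_ℝ ≤ L * nrm (xk - yk) ^ ν * nrm (yk - xk1) :=
    calc ⟪F xk - F yk, xk1 - yk⟫_ℝ ≤ dnrm (F xk - F yk) * nrm (xk1 - yk) :=
          hdual _ ▸ inner_le_sSup_mul_nrm hn0 hns hnt _ _
      _ ≤ L * nrm (xk - yk) ^ ν * nrm (yk - xk1) := by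
          rw [nrm_sub_comm_of_homogeneous hns]
          exact mul_le_mul_of_nonneg_right (hF xk hxk yk hykX)
            (nrm_nonneg_of_homogeneous hns hnt _)
  exact sub_mul_rpow_le_of_add_le_add_mul_rpow_mul hα hν0.le (nrm_nonneg_of_homogeneous hns hnt _)
    (hsc xk hxko yk hykX) (hsc yk hyko xk1 hxk1X)
    (hstep.trans (add_le_add_right (mul_le_mul_of_nonneg_left hholder hγk.le) _))

/-- For the extragradient step with a `ν`-Hölder continuous operator `F` (constant `L`)
and a generalized-monotone solution `x*`:
`V(x_k,y_k) − 2^{ν−1} L² γ_k² α^{−(1+ν)} [V(x_k,y_k)]^ν ≤ V(x_k,x*) − V(x_{k+1},x*)`. -/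
theorem stmt14 {n : ℕ} (X Xo : Set (EuclideanSpace ℝ (Fin n)))
    (hXne : X.Nonempty) (hXcl : IsClosed X) (hXcv : Convex ℝ X) (hXoX : Xo ⊆ X)
    (nrm dnrm : EuclideanSpace ℝ (Fin n) → ℝ)
    (hn0 : ∀ v, nrm v = 0 ↔ v = 0)
    (hns : ∀ (c : ℝ) v, nrm (c • v) = |c| * nrm v)
    (hnt : ∀ v w, nrm (v + w) ≤ nrm v + nrm w)
    (hdual : ∀ φ, dnrm φ = sSup ((fun v => ⟪φ, v⟫_ℝ) '' {v | nrm v ≤ 1}))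
    (F : EuclideanSpace ℝ (Fin n) → EuclideanSpace ℝ (Fin n))
    (L : ℝ) (hL : 0 < L) (ν : ℝ) (hν0 : 0 < ν) (hν1 : ν ≤ 1)
    (hF : ∀ x ∈ X, ∀ y ∈ X, dnrm (F x - F y) ≤ L * (nrm (x - y)) ^ ν)
    (α : ℝ) (hα : 0 < α)
    (ω : EuclideanSpace ℝ (Fin n) → ℝ)
    (gω : EuclideanSpace ℝ (Fin n) → EuclideanSpace ℝ (Fin n))
    (hωcv : ConvexOn ℝ X ω)
    (hgrad : ∀ y ∈ Xo, HasGradientAt ω (gω y) y)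
    (hsc : ∀ y ∈ Xo, ∀ z ∈ X, α / 2 * (nrm (y - z)) ^ 2 ≤ bregman ω gω y z)
    (xs : EuclideanSpace ℝ (Fin n)) (hxs : xs ∈ X)
    (hGM : ∀ x ∈ X, 0 ≤ ⟪F x, x - xs⟫_ℝ)
    (γk : ℝ) (hγk : 0 < γk)
    (xk yk xk1 : EuclideanSpace ℝ (Fin n))
    (hxk : xk ∈ X) (hxko : xk ∈ Xo)
    (hykX : yk ∈ X) (hyko : yk ∈ Xo)
    (hyk : IsMinOn (fun z => ⟪γk • F xk, z⟫_ℝ + bregman ω gω xk z) X yk)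
    (hxk1X : xk1 ∈ X) (hxk1o : xk1 ∈ Xo)
    (hxk1 : IsMinOn (fun z => ⟪γk • F yk, z⟫_ℝ + bregman ω gω xk z) X xk1) :
    bregman ω gω xk yk -
        (2 : ℝ) ^ (ν - 1) * L ^ 2 * γk ^ 2 * α ^ (-(1 + ν)) *
          (bregman ω gω xk yk) ^ ν ≤
      bregman ω gω xk xs - bregman ω gω xk1 xs :=
  stmt14_general X Xo hXcv nrm dnrm hn0 hns hnt hdual F L ν hν0 hF α hα ω gω hgrad hsc xs hxs hGM γk
    hγk xk yk xk1 hxk hxko hykX hyko hyk hxk1X hxk1o hxk1
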